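/- For every d ≥ 1, p_d(1)² < p_d(0)·p_d(2) and p_d(2)² > p_d(1)·p_d(3). Moreover p_d(3)² > p_d(2)·p_d(4) if and only if d ≥ 4, and p_d(4)² < p_d(3)·p_d(5) if and only if d ≥ 6. -/

import Mathlib

/-!
Multiplying `∑ p n qⁿ` by `∏_{n ≤ 5} (1 - qⁿ)^{n^(d-1)}` and reading off the coefficients
of `q⁰, …, q⁵` gives a triangular linear system, whose solution expresses `p 0, …, p 5`
through `2^(d-1), …, 6^(d-1)`. Each relation then says that one sum of exponentials in `d - 1`
beats another. Such a comparison propagates from one exponent to the next as soon as the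
winning sum grows at least by some factor `r` per step and the losing one at most by `r`; the
growth of the winning sum is itself a comparison of the same kind. Below the thresholds only
finitely many values of `d` remain, and they are checked numerically.
-/

open PowerSeries Finset

/-- `p : ℕ → ℚ` is the coefficient sequence of `∏_{n≥1} (1-q^n)^{-n^(d-1)}`. -/
def IsPdSeries (d : ℕ) (p : ℕ → ℚ) : Prop :=
  ∀ N k : ℕ, k ≤ N →
    (PowerSeries.coeff (R := ℚ) k) ((PowerSeries.mk p) *
      ∏ n ∈ Finset.Icc 1 N, (1 - (PowerSeries.X : PowerSeries ℚ) ^ n) ^ (n ^ (d - 1))) =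
    if k = 0 then 1 else 0

theorem PowerSeries.coeff_mul_one_sub_X_pow_pow {R : Type*} [CommRing R] (f : R⟦X⟧) {n : ℕ}
    (hn : 0 < n) (m k : ℕ) :
    coeff k (f * (1 - X ^ n) ^ m) =
      ∑ j ∈ range (k / n + 1), (-1) ^ j * m.choose j * coeff (k - n * j) f := by
  set g : ℕ → R := fun j ↦
    (-1) ^ j * m.choose j * if n * j ≤ k then coeff (k - n * j) f else 0
  have binomial : (1 - X ^ n : R⟦X⟧) ^ m =
      ∑ j ∈ range (m + 1), C ((-1 : R) ^ j * m.choose j) * X ^ (n * j) := by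
    rw [sub_eq_neg_add, add_pow]
    refine sum_congr rfl fun j _ ↦ ?_
    rw [map_mul, map_pow, map_neg, map_one, map_natCast, pow_mul]
    ring
  have lhs : coeff k (f * (1 - X ^ n) ^ m) = ∑ j ∈ range (m + 1), g j := by
    rw [binomial, mul_sum, map_sum]
    refine sum_congr rfl fun j _ ↦ ?_
    rw [mul_left_comm, coeff_C_mul, coeff_mul_X_pow']
  have rhs : ∑ j ∈ range (k / n + 1), (-1) ^ j * m.choose j * coeff (k - n * j) f =
      ∑ j ∈ range (k / n + 1), g j := by
    refine sum_congr rfl fun j hj ↦ ?_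
    have : n * j ≤ k := (Nat.mul_le_mul_left n (by simpa [Nat.lt_succ_iff] using hj)).trans
      (Nat.mul_div_le k n)
    simp [g, this]
  have g_choose : ∀ j ≥ m + 1, g j = 0 := fun j hj ↦ by
    simp [g, Nat.choose_eq_zero_of_lt (show m < j by omega)]
  have g_div : ∀ j ≥ k / n + 1, g j = 0 := fun j hj ↦ by
    have : k < n * j := by rw [mul_comm]; exact (Nat.div_lt_iff_lt_mul hn).1 (by omega)
    simp [g, not_le.2 this]
  rw [lhs, rhs, ← eventually_constant_sum g_choose (Nat.le_add_right _ (k / n)),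
    ← eventually_constant_sum g_div (by omega : k / n + 1 ≤ m + 1 + k / n)]

theorem lt_of_lt_of_growth {α : Type*} [Mul α] [Zero α] [Preorder α] [PosMulStrictMono α]
    {f g : ℕ → α} {r : α} (hr : 0 < r) {n₀ : ℕ} (h₀ : g n₀ < f n₀)
    (hf : ∀ n ≥ n₀, r * f n ≤ f (n + 1)) (hg : ∀ n ≥ n₀, g (n + 1) ≤ r * g n) :
    ∀ n ≥ n₀, g n < f n := by
  intro n hn
  induction n, hn using Nat.le_induction with
  | base => exact h₀
  | succ n hn ih =>
    exact (hg n hn).trans_lt ((mul_lt_mul_of_pos_left ih hr).trans_le (hf n hn))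

namespace IsPdSeries

variable {d : ℕ} {p : ℕ → ℚ}

theorem closed_forms (hp : IsPdSeries d p) :
    p 0 = 1 ∧ p 1 = 1 ∧ p 2 = 2 ^ (d - 1) + 1 ∧ p 3 = 3 ^ (d - 1) + 2 ^ (d - 1) + 1 ∧
      p 4 = 3 / 2 * 4 ^ (d - 1) + 3 ^ (d - 1) + 3 / 2 * 2 ^ (d - 1) + 1 ∧
      p 5 = 6 ^ (d - 1) + 5 ^ (d - 1) + p 4 := by
  obtain ⟨h0, h1, h2, h3, h4, h5⟩ : _ ∧ _ ∧ _ ∧ _ ∧ _ ∧ _ := ⟨hp 5 0 (by norm_num),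
    hp 5 1 (by norm_num), hp 5 2 (by norm_num), hp 5 3 (by norm_num), hp 5 4 (by norm_num),
    hp 5 5 le_rfl⟩
  simp only [prod_Icc_succ_top, Icc_self, prod_singleton, Nat.one_le_ofNat, ← mul_assoc,
    coeff_mul_one_sub_X_pow_pow _ one_pos, coeff_mul_one_sub_X_pow_pow _ two_pos,
    coeff_mul_one_sub_X_pow_pow _ three_pos, coeff_mul_one_sub_X_pow_pow _ four_pos,
    coeff_mul_one_sub_X_pow_pow _ (by norm_num : 0 < 5), sum_range_succ, sum_range_zero,
    Nat.reduceAdd, Nat.reduceDiv, Nat.reduceMul, Nat.reduceSub, coeff_mk, one_pow]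
    at h0 h1 h2 h3 h4 h5
  norm_num [Nat.choose_eq_zero_of_lt, Nat.cast_choose_two] at h0 h1 h2 h3 h4 h5
  have four : (4 : ℚ) ^ (d - 1) = 2 ^ (d - 1) * 2 ^ (d - 1) := by rw [← mul_pow]; norm_num
  have six : (6 : ℚ) ^ (d - 1) = 2 ^ (d - 1) * 3 ^ (d - 1) := by rw [← mul_pow]; norm_num
  rw [h0] at h1 h2 h3 h4 h5
  have e1 : p 1 = 1 := by linear_combination h1
  rw [e1] at h2 h3 h4 h5
  have e2 : p 2 = 2 ^ (d - 1) + 1 := by linear_combination h2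
  rw [e2] at h3 h4 h5
  have e3 : p 3 = 3 ^ (d - 1) + 2 ^ (d - 1) + 1 := by linear_combination h3
  rw [e3] at h4 h5
  have e4 : p 4 = 3 / 2 * 4 ^ (d - 1) + 3 ^ (d - 1) + 3 / 2 * 2 ^ (d - 1) + 1 := by
    linear_combination h4 + (-1/2) * four
  refine ⟨h0, e1, e2, e3, e4, ?_⟩
  rw [e4] at h5 ⊢
  linear_combination h5 - six

theorem log_convex_one (hp : IsPdSeries d p) : p 1 ^ 2 < p 0 * p 2 := by
  obtain ⟨h0, h1, h2, -⟩ := hp.closed_forms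
  rw [h0, h1, h2]
  norm_num

theorem log_concave_two (hp : IsPdSeries d p) : p 1 * p 3 < p 2 ^ 2 := by
  obtain ⟨-, h1, h2, h3, -⟩ := hp.closed_forms
  have three_le_four : (3 : ℚ) ^ (d - 1) ≤ 2 ^ (d - 1) * 2 ^ (d - 1) := by
    rw [← mul_pow]; exact pow_le_pow_left₀ (by norm_num) (by norm_num) _
  rw [h1, h2, h3]
  nlinarith [pow_pos (two_pos : (0 : ℚ) < 2) (d - 1)]

theorem log_concave_three_iff (hp : IsPdSeries d p) : p 2 * p 4 < p 3 ^ 2 ↔ 4 ≤ d := by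
  obtain ⟨-, -, h2, h3, h4, -⟩ := hp.closed_forms
  have key : p 3 ^ 2 - p 2 * p 4 =
      ((2 * 9 ^ (d - 1) + 2 * 6 ^ (d - 1) + 2 * 3 ^ (d - 1)) -
        (3 * 8 ^ (d - 1) + 4 * 4 ^ (d - 1) + 2 ^ (d - 1))) / 2 := by
    rw [h2, h3, h4, show (9 : ℚ) = 3 * 3 by norm_num, show (8 : ℚ) = 2 * 2 * 2 by norm_num,
      show (6 : ℚ) = 2 * 3 by norm_num, show (4 : ℚ) = 2 * 2 by norm_num]
    simp only [mul_pow]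
    ring
  have grows_by_ratio : ∀ n ≥ 3, (4 * 6 ^ n + 10 * 3 ^ n : ℚ) < 2 * 9 ^ n := by
    refine lt_of_lt_of_growth (f := fun n ↦ 2 * 9 ^ n) (g := fun n ↦ 4 * 6 ^ n + 10 * 3 ^ n)
      (r := 9) (by norm_num) (by norm_num) (fun n _ ↦ ?_) (fun n _ ↦ ?_)
    · simp only [pow_succ]; linarith
    · simp only [pow_succ]
      linarith [pow_pos (by norm_num : (0 : ℚ) < 6) n, pow_pos (by norm_num : (0 : ℚ) < 3) n]
  have exp_sum_lt :
      ∀ n ≥ 3, (3 * 8 ^ n + 4 * 4 ^ n + 2 ^ n : ℚ) < 2 * 9 ^ n + 2 * 6 ^ n + 2 * 3 ^ n := by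
    refine lt_of_lt_of_growth (f := fun n ↦ 2 * 9 ^ n + 2 * 6 ^ n + 2 * 3 ^ n)
      (g := fun n ↦ 3 * 8 ^ n + 4 * 4 ^ n + 2 ^ n)
      (r := 8) (by norm_num) (by norm_num) (fun n hn ↦ ?_) (fun n _ ↦ ?_)
    · simp only [pow_succ]; linarith [grows_by_ratio n hn]
    · simp only [pow_succ]
      linarith [pow_pos (by norm_num : (0 : ℚ) < 4) n, pow_pos (by norm_num : (0 : ℚ) < 2) n]
  rw [← sub_pos, key, div_pos_iff_of_pos_right two_pos, sub_pos]
  constructor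
  · contrapose!
    intro hd
    interval_cases d <;> norm_num
  · intro hd
    exact exp_sum_lt _ (by omega)

theorem log_convex_four_iff (hp : IsPdSeries d p) : p 4 ^ 2 < p 3 * p 5 ↔ 6 ≤ d := by
  obtain ⟨-, -, -, h3, h4, h5⟩ := hp.closed_forms
  have key : p 3 * p 5 - p 4 ^ 2 =
      ((2 * 6 ^ (d - 1) + 4 * 18 ^ (d - 1) + 4 * 5 ^ (d - 1) + 4 * 10 ^ (d - 1) +
          4 * 15 ^ (d - 1)) -
        (2 * 12 ^ (d - 1) + 2 * 2 ^ (d - 1) + 9 * 4 ^ (d - 1) + 12 * 8 ^ (d - 1) +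
          9 * 16 ^ (d - 1))) / 4 := by
    rw [h5, h3, h4, show (16 : ℚ) = 2 * 2 * 2 * 2 by norm_num,
      show (18 : ℚ) = 2 * 3 * 3 by norm_num, show (15 : ℚ) = 3 * 5 by norm_num,
      show (12 : ℚ) = 2 * 2 * 3 by norm_num,
      show (10 : ℚ) = 2 * 5 by norm_num, show (8 : ℚ) = 2 * 2 * 2 by norm_num,
      show (6 : ℚ) = 2 * 3 by norm_num, show (4 : ℚ) = 2 * 2 by norm_num]
    simp only [mul_pow]
    ring
  have grows_by_ratio :
      ∀ n ≥ 5, (20 * 6 ^ n + 44 * 5 ^ n + 24 * 10 ^ n + 4 * 15 ^ n : ℚ) < 8 * 18 ^ n := by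
    refine lt_of_lt_of_growth (f := fun n ↦ 8 * 18 ^ n)
      (g := fun n ↦ 20 * 6 ^ n + 44 * 5 ^ n + 24 * 10 ^ n + 4 * 15 ^ n)
      (r := 18) (by norm_num) (by norm_num) (fun n _ ↦ ?_) (fun n _ ↦ ?_)
    · simp only [pow_succ]; linarith
    · simp only [pow_succ]
      linarith [pow_pos (by norm_num : (0 : ℚ) < 6) n, pow_pos (by norm_num : (0 : ℚ) < 5) n,
        pow_pos (by norm_num : (0 : ℚ) < 10) n, pow_pos (by norm_num : (0 : ℚ) < 15) n]
  have exp_sum_lt :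
      ∀ n ≥ 5, (2 * 12 ^ n + 2 * 2 ^ n + 9 * 4 ^ n + 12 * 8 ^ n + 9 * 16 ^ n : ℚ) <
        2 * 6 ^ n + 4 * 18 ^ n + 4 * 5 ^ n + 4 * 10 ^ n + 4 * 15 ^ n := by
    refine lt_of_lt_of_growth
      (f := fun n ↦ 2 * 6 ^ n + 4 * 18 ^ n + 4 * 5 ^ n + 4 * 10 ^ n + 4 * 15 ^ n)
      (g := fun n ↦ 2 * 12 ^ n + 2 * 2 ^ n + 9 * 4 ^ n + 12 * 8 ^ n + 9 * 16 ^ n)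
      (r := 16) (by norm_num) (by norm_num) (fun n hn ↦ ?_) (fun n _ ↦ ?_)
    · simp only [pow_succ]; linarith [grows_by_ratio n hn]
    · simp only [pow_succ]
      linarith [pow_pos (by norm_num : (0 : ℚ) < 12) n, pow_pos (by norm_num : (0 : ℚ) < 2) n,
        pow_pos (by norm_num : (0 : ℚ) < 4) n, pow_pos (by norm_num : (0 : ℚ) < 8) n]
  rw [← sub_pos, key, div_pos_iff_of_pos_right four_pos, sub_pos]
  constructor
  · contrapose!
    intro hd
    interval_cases d <;> norm_num
  · intro hd
    exact exp_sum_lt _ (by omega)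

end IsPdSeries

theorem pd_small_log_relations_general (d : ℕ) (p : ℕ → ℚ) (hp : IsPdSeries d p) :
    p 1 ^ 2 < p 0 * p 2 ∧
    p 2 ^ 2 > p 1 * p 3 ∧
    (p 3 ^ 2 > p 2 * p 4 ↔ 4 ≤ d) ∧
    (p 4 ^ 2 < p 3 * p 5 ↔ 6 ≤ d) :=
  ⟨hp.log_convex_one, hp.log_concave_two, hp.log_concave_three_iff, hp.log_convex_four_iff⟩

/-- Log-concavity/convexity relations of `p_d` at `n = 1, 2, 3, 4`. -/
theorem pd_small_log_relations (d : ℕ) (hd : 1 ≤ d) (p : ℕ → ℚ) (hp : IsPdSeries d p) :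
    p 1 ^ 2 < p 0 * p 2 ∧
    p 2 ^ 2 > p 1 * p 3 ∧
    (p 3 ^ 2 > p 2 * p 4 ↔ 4 ≤ d) ∧
    (p 4 ^ 2 < p 3 * p 5 ↔ 6 ≤ d) :=
  pd_small_log_relations_general d p hp
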